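/- arXiv:2407.14866 — 5 statements merged into one kernel-verified Lean document; each statement's English description precedes it below -/
import Mathlib

section
/- Let q ≥ 2 and n ≥ 2 be integers. If u = (u_0, u_1, ..., u_{n-1}) is an n-tuple with entries in ℤ_q that is both symmetric and (n-2)-symmetric, then: if n is even, u is uniform; and if n is odd, u is either uniform or alternating. -/
namespace OSeq

variable {q : ℕ}

/-- The `n`-tuple (window) of the sequence `s` at position `i`. -/
def window (s : ℤ → ZMod q) (n : ℕ) (i : ℤ) : Fin n → ZMod q :=
  fun k => s (i + (k : ℕ))

/-- The reverse of an `n`-tuple. -/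
def tupRev {n : ℕ} (u : Fin n → ZMod q) : Fin n → ZMod q :=
  fun k => u k.rev

/-- `m` is the (least) period of the periodic sequence `s`. -/
def IsPeriod (s : ℤ → ZMod q) (m : ℕ) : Prop :=
  0 < m ∧ (∀ i : ℤ, s (i + (m : ℤ)) = s i) ∧
    ∀ m' : ℕ, 0 < m' → (∀ i : ℤ, s (i + (m' : ℤ)) = s i) → m ≤ m'

/-- `s` is an `n`-window sequence of period `m`. -/
def IsNWindowSeq (s : ℤ → ZMod q) (n m : ℕ) : Prop :=
  IsPeriod s m ∧ ∀ i j : ℤ, window s n i = window s n j → i ≡ j [ZMOD (m : ℤ)]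

/-- `s` is an orientable sequence of order `n` and period `m`. -/
def IsOS (s : ℤ → ZMod q) (n m : ℕ) : Prop :=
  IsNWindowSeq s n m ∧ ∀ i j : ℤ, window s n i ≠ tupRev (window s n j)

/-- `s` is a negative orientable sequence of order `n` and period `m`. -/
def IsNOS (s : ℤ → ZMod q) (n m : ℕ) : Prop :=
  IsNWindowSeq s n m ∧ ∀ i j : ℤ, window s n i ≠ - tupRev (window s n j)

/-- `s` is a special orientable sequence of order `n` and period `m`:
orientable and also negative orientable. -/
def IsSpecialOS (s : ℤ → ZMod q) (n m : ℕ) : Prop :=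
  IsOS s n m ∧ ∀ i j : ℤ, window s n i ≠ - tupRev (window s n j)

/-- The weight modulo `q` of one period of `s`. -/
def wq (s : ℤ → ZMod q) (m : ℕ) : ZMod q :=
  ∑ i ∈ Finset.range m, s (i : ℤ)

/-- The alternating sign weight modulo `q` of one period of `s`. -/
def wqA (s : ℤ → ZMod q) (m : ℕ) : ZMod q :=
  ∑ i ∈ Finset.range m, (-1 : ZMod q) ^ (m - 1 - i) * s (i : ℤ)

/-- The Lempel homomorphism `D` on sequences. -/
def D (t : ℤ → ZMod q) : ℤ → ZMod q := fun j => t (j + 1) - t j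

/-- The homomorphism `A` on sequences. -/
def A (t : ℤ → ZMod q) : ℤ → ZMod q := fun j => t (j + 1) + t j

/-- Shift of a sequence by `c`. -/
def shift (t : ℤ → ZMod q) (c : ℤ) : ℤ → ZMod q := fun i => t (i + c)

/-- `t'` is a translate of `t`. -/
def IsTranslate (t t' : ℤ → ZMod q) : Prop := ∃ c : ZMod q, ∀ i : ℤ, t' i = t i + c

/-- `t'` is an alternating sign translate of `t`. -/
def IsAltTranslate (t t' : ℤ → ZMod q) : Prop :=
  ∃ c : ZMod q, ∀ i : ℤ, t' i = t i + (if i % 2 = 0 then c else -c)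

/-- Two sequences are (`n`-window) disjoint. -/
def WindowDisjoint (n : ℕ) (s t : ℤ → ZMod q) : Prop :=
  ∀ i j : ℤ, window s n i ≠ window t n j

/-- Orientable-disjoint. -/
def ODisjoint (n : ℕ) (s t : ℤ → ZMod q) : Prop :=
  WindowDisjoint n s t ∧ ∀ i j : ℤ, window s n i ≠ tupRev (window t n j)

/-- Negative orientable-disjoint (no-disjoint). -/
def NODisjoint (n : ℕ) (s t : ℤ → ZMod q) : Prop :=
  WindowDisjoint n s t ∧ ∀ i j : ℤ, window s n i ≠ - tupRev (window t n j)

/-- Special-orientable-disjoint. -/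
def SpecialODisjoint (n : ℕ) (s t : ℤ → ZMod q) : Prop :=
  ODisjoint n s t ∧ ∀ i j : ℤ, window s n i ≠ - tupRev (window t n j)

/-- The string `a^t` appears in `s`. -/
def HasString (s : ℤ → ZMod q) (a : ZMod q) (t : ℕ) : Prop :=
  ∃ j : ℤ, ∀ k : ℕ, k < t → s (j + (k : ℤ)) = a

/-- There is a run `a^t` of `a` in `s` starting at position `j`. -/
def IsRunAt (s : ℤ → ZMod q) (a : ZMod q) (j : ℤ) (t : ℕ) : Prop :=
  (∀ k : ℕ, k < t → s (j + (k : ℤ)) = a) ∧ s (j - 1) ≠ a ∧ s (j + (t : ℤ)) ≠ a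

/-- `a^t` is a maximal run of `a` in `s`: the string `a^t` appears and every
string `a^{t'}` appearing in `s` has `t' ≤ t`. -/
def IsMaxRun (s : ℤ → ZMod q) (a : ZMod q) (t : ℕ) : Prop :=
  HasString s a t ∧ ∀ t' : ℕ, HasString s a t' → t' ≤ t

/-- `k`-th entry of the alternating string `a, -a, a, -a, ...`. -/
def altVal (a : ZMod q) (k : ℕ) : ZMod q := if k % 2 = 0 then a else -a

/-- The signed string `ạ^t` (alternating `a, -a, ...`) appears in `s`. -/
def HasSignedString (s : ℤ → ZMod q) (a : ZMod q) (t : ℕ) : Prop :=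
  ∃ j : ℤ, ∀ k : ℕ, k < t → s (j + (k : ℤ)) = altVal a k

/-- There is a signed run `ạ^t` of `a` in `s` starting at position `j`. -/
def IsSignedRunAt (s : ℤ → ZMod q) (a : ZMod q) (j : ℤ) (t : ℕ) : Prop :=
  (∀ k : ℕ, k < t → s (j + (k : ℤ)) = altVal a k) ∧
    s (j - 1) ≠ -a ∧ s (j + (t : ℤ)) ≠ altVal a t

/-- `ạ^t` is a maximal signed run of `a` in `s`. -/
def IsMaxSignedRun (s : ℤ → ZMod q) (a : ZMod q) (t : ℕ) : Prop :=
  HasSignedString s a t ∧ ∀ t' : ℕ, HasSignedString s a t' → t' ≤ t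

/-- The sequence obtained from the ring sequence `[s_0,...,s_{m-1}]` of `s` by
inserting one extra symbol `a` at ring position `r`, i.e. with ring sequence
`[s_0,...,s_{r-1}, a, s_r, ..., s_{m-1}]` of length `m+1`. -/
def insert1 (s : ℤ → ZMod q) (m r : ℕ) (a : ZMod q) : ℤ → ZMod q :=
  fun j =>
    let j' := (j % ((m : ℤ) + 1)).toNat
    if j' < r then s (j' : ℤ) else if j' = r then a else s ((j' : ℤ) - 1)

/-- The sequence obtained from the ring sequence `[s_0,...,s_{m-1}]` of `s` by
inserting the two symbols `a, -a` at ring position `r`, i.e. with ring sequence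
`[s_0,...,s_{r-1}, a, -a, s_r, ..., s_{m-1}]` of length `m+2`. -/
def insert2 (s : ℤ → ZMod q) (m r : ℕ) (a : ZMod q) : ℤ → ZMod q :=
  fun j =>
    let j' := (j % ((m : ℤ) + 2)).toNat
    if j' < r then s (j' : ℤ)
    else if j' = r then a
    else if j' = r + 1 then -a
    else s ((j' : ℤ) - 2)

/-- The operation `E_a` (with the convention `E_0(S) = S`). -/
def Emod (s : ℤ → ZMod q) (m r : ℕ) (a : ZMod q) : ℤ → ZMod q :=
  if a = 0 then s else insert1 s m r a

/-- A sequence is good (for order `n`) if every run of `0` has length at most `n-2`. -/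
def GoodSeq (s : ℤ → ZMod q) (n : ℕ) : Prop :=
  ∀ t : ℕ, HasString s 0 t → t ≤ n - 2

/-- A tuple is uniform if it is constant. -/
def Uniform {n : ℕ} (u : Fin n → ZMod q) : Prop := ∃ c : ZMod q, ∀ i, u i = c

/-- A tuple is symmetric if it equals its own reverse. -/
def Symm {n : ℕ} (u : Fin n → ZMod q) : Prop := ∀ i : Fin n, u i = u i.rev

/-- An `n`-tuple is `m`-symmetric (`m ≤ n`) if `u_i = u_{m-1-i}` for `0 ≤ i ≤ m-1`. -/
def MSymm {n : ℕ} (u : Fin n → ZMod q) (m : ℕ) (hm : m ≤ n) : Prop :=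
  ∀ i : Fin m, u (Fin.castLE hm i) = u (Fin.castLE hm i.rev)

/-- An `n`-tuple (`n ≥ 2`) is alternating. -/
def Alternating {n : ℕ} (hn : 2 ≤ n) (u : Fin n → ZMod q) : Prop :=
  u ⟨0, by omega⟩ ≠ u ⟨1, by omega⟩ ∧
    ∀ i : Fin n, u i = if (i : ℕ) % 2 = 0 then u ⟨0, by omega⟩ else u ⟨1, by omega⟩

/-- `L_n(v)`: the set of `n`-tuples whose first `n-r` entries agree with the
`(n-r)`-tuple `v`. -/
def Lset (n r : ℕ) (v : Fin (n - r) → ZMod q) : Set (Fin n → ZMod q) :=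
  {u | ∀ i : Fin (n - r), u (Fin.castLE (Nat.sub_le n r) i) = v i}

/-- The `n`-tuple `u` appears in the sequence `s`. -/
def AppearsIn (s : ℤ → ZMod q) (n : ℕ) (u : Fin n → ZMod q) : Prop :=
  ∃ i : ℤ, window s n i = u

end OSeq

open OSeq
/-- If `q ≥ 2`, `n ≥ 2` and the `n`-tuple `u` over `ℤ_q` is both symmetric and
`(n-2)`-symmetric, then `u` is uniform if `n` is even, and `u` is uniform or
alternating if `n` is odd. -/
theorem symmetric_and_sub_two_symmetric {q n : ℕ} (hq : 2 ≤ q) (hn : 2 ≤ n)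
    (u : Fin n → ZMod q) (h1 : Symm u) (h2 : MSymm u (n - 2) (Nat.sub_le n 2)) :
    (Even n → Uniform u) ∧ (Odd n → Uniform u ∨ Alternating hn u) := by
  have hsym : ∀ i : ℕ, ∀ h : i < n, u ⟨i, h⟩ = u ⟨n - 1 - i, by omega⟩ := by
    intro i h
    have := h1 ⟨i, h⟩
    simp only [Fin.rev] at this
    rw [this]; congr 1; rw [Fin.mk.injEq]; omega
  have hstep : ∀ i : ℕ, ∀ h : i + 2 < n, u ⟨i, by omega⟩ = u ⟨i + 2, h⟩ := by
    intro i h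
    have h2' := h2 ⟨i, by omega⟩
    simp only [Fin.rev, Fin.castLE] at h2'
    have e1 : u ⟨i, by omega⟩ = u ⟨n - 2 - (i + 1), by omega⟩ := h2'
    have e2 : u ⟨n - 2 - (i + 1), by omega⟩ = u ⟨n - 1 - (n - 2 - (i + 1)), by omega⟩ :=
      hsym (n - 2 - (i + 1)) (by omega)
    have e3 : (⟨n - 1 - (n - 2 - (i + 1)), by omega⟩ : Fin n) = ⟨i + 2, h⟩ := by
      rw [Fin.mk.injEq]; omega
    rw [e1, e2, e3]
  have hmod : ∀ i : ℕ, ∀ h : i < n, u ⟨i, h⟩ = u ⟨i % 2, by omega⟩ := by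
    intro i
    induction i using Nat.strong_induction_on with
    | _ i ih =>
      intro h
      rcases Nat.lt_or_ge i 2 with hi | hi
      · congr 1; rw [Fin.mk.injEq]; omega
      · obtain ⟨j, rfl⟩ : ∃ j, i = j + 2 := ⟨i - 2, by omega⟩
        rw [← hstep j h, ih j (by omega) (by omega)]
        congr 1; rw [Fin.mk.injEq]; omega
  by_cases h01 : u ⟨0, by omega⟩ = u ⟨1, by omega⟩
  · have huni : Uniform u := by
      refine ⟨u ⟨0, by omega⟩, fun i => ?_⟩
      have := hmod i i.2
      rw [show (⟨i.val, i.2⟩ : Fin n) = i from rfl] at this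
      rw [this]
      rcases Nat.mod_two_eq_zero_or_one i.val with h0 | h0 <;> simp [h0, h01.symm]
    exact ⟨fun _ => huni, fun _ => Or.inl huni⟩
  · constructor
    · rintro ⟨k, hk⟩
      exfalso
      apply h01
      have := hsym 0 (by omega)
      rw [this, hmod (n - 1 - 0) (by omega)]
      congr 1; rw [Fin.mk.injEq]; omega
    · intro _
      right
      refine ⟨h01, fun i => ?_⟩
      have := hmod i i.2
      rw [show (⟨i.val, i.2⟩ : Fin n) = i from rfl] at this
      rw [this]
      rcases Nat.mod_two_eq_zero_or_one i.val with h0 | h0 <;> simp [h0]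
end

section
/- Let q ≥ 2 and n ≥ 1 be integers. The period of any orientable sequence of order n over ℤ_q is at most (q^n − q^{⌈n/2⌉})/2. -/
open OSeq

/-! The `m` windows of an orientable sequence and their `m` reversals are `2m` distinct
`n`-tuples, and none of them is a palindrome. A palindrome is determined by its first
`⌈n/2⌉` entries, so there are `q ^ ⌈n/2⌉` palindromes among the `q ^ n` tuples. -/

open Finset

namespace OSeq

variable {q : ℕ}

theorem tupRev_involutive (n : ℕ) : Function.Involutive (tupRev : (Fin n → ZMod q) → _) :=
  fun _ => funext fun k => by simp only [tupRev, Fin.rev_rev]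

def foldIndex (n : ℕ) (k : Fin n) : Fin ((n + 1) / 2) :=
  ⟨min (k : ℕ) (n - 1 - k), by have := k.isLt; omega⟩

theorem foldIndex_rev {n : ℕ} (k : Fin n) : foldIndex n k.rev = foldIndex n k := by
  ext
  simp only [foldIndex, Fin.val_rev]
  omega

theorem foldIndex_castLE {n : ℕ} (j : Fin ((n + 1) / 2)) :
    foldIndex n (Fin.castLE (by omega) j) = j := by
  ext
  simp only [foldIndex, Fin.val_castLE]
  omega

theorem foldIndex_surjective (n : ℕ) : Function.Surjective (foldIndex n) :=
  fun j => ⟨_, foldIndex_castLE j⟩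

theorem tupRev_eq_self_iff {n : ℕ} (u : Fin n → ZMod q) :
    tupRev u = u ↔ ∃ v : Fin ((n + 1) / 2) → ZMod q, v ∘ foldIndex n = u := by
  constructor
  · intro hu
    refine ⟨u ∘ Fin.castLE (by omega), funext fun k => ?_⟩
    have hk := k.isLt
    rcases le_total (k : ℕ) (n - 1 - k) with h | h
    · exact congrArg u (Fin.ext (by simp [foldIndex, h]))
    · rw [← congrFun hu k]
      exact congrArg u (Fin.ext (by simp [foldIndex, h, Fin.val_rev]; omega))
  · rintro ⟨v, rfl⟩
    funext k
    simp only [tupRev, Function.comp_apply, foldIndex_rev]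

theorem card_filter_tupRev_eq_self (n : ℕ) [NeZero q] :
    #{u : Fin n → ZMod q | tupRev u = u} = q ^ ((n + 1) / 2) := by
  classical
  have hpal : ({u : Fin n → ZMod q | tupRev u = u} : Finset _) =
      univ.image (fun v : Fin ((n + 1) / 2) → ZMod q => v ∘ foldIndex n) := by
    ext u
    simp [tupRev_eq_self_iff]
  rw [hpal, card_image_of_injective _ (foldIndex_surjective n).injective_comp_right,
    card_univ, Fintype.card_fun, ZMod.card, Fintype.card_fin]

theorem two_mul_card_add_pow_le_of_forall_ne_tupRev [NeZero q] {n : ℕ}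
    (W : Finset (Fin n → ZMod q)) (hW : ∀ u ∈ W, ∀ v ∈ W, u ≠ tupRev v) :
    2 * #W + q ^ ((n + 1) / 2) ≤ q ^ n := by
  classical
  set P : Finset (Fin n → ZMod q) := {u | tupRev u = u}
  have hWR : Disjoint W (W.image tupRev) := by
    simp only [disjoint_left, mem_image, not_exists, not_and]
    rintro u hu v hv rfl
    exact hW _ hu v hv rfl
  have hWRP : Disjoint (W ∪ W.image tupRev) P := by
    simp only [P, disjoint_left, mem_union, mem_image, mem_filter, mem_univ, true_and]
    rintro u (hu | ⟨v, hv, rfl⟩) hpal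
    · exact hW u hu u hu hpal.symm
    · rw [tupRev_involutive n v] at hpal
      exact hW v hv v hv hpal
  calc 2 * #W + q ^ ((n + 1) / 2)
      = #(W ∪ W.image tupRev ∪ P) := by
        rw [card_union_of_disjoint hWRP, card_union_of_disjoint hWR,
          card_image_of_injective _ (tupRev_involutive n).injective,
          card_filter_tupRev_eq_self]
        ring
    _ ≤ q ^ n := by
        simpa only [Fintype.card_fun, ZMod.card, Fintype.card_fin] using
          card_le_univ (W ∪ W.image tupRev ∪ P)

theorem IsNWindowSeq.injOn_window {s : ℤ → ZMod q} {n m : ℕ} (hS : IsNWindowSeq s n m) :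
    Set.InjOn (fun i : ℕ => window s n i) (range m) := by
  intro i hi j hj hij
  simp only [coe_range, Set.mem_Iio] at hi hj
  have hdvd : (m : ℤ) ∣ (j : ℤ) - i := (hS.2 _ _ hij).dvd
  have := Int.eq_zero_of_abs_lt_dvd hdvd (by rw [abs_lt]; omega)
  omega

end OSeq

theorem period_le_of_orientable_general {q n m : ℕ} (hq : 2 ≤ q)
    (s : ℤ → ZMod q) (hS : IsOS s n m) :
    2 * (m : ℤ) ≤ (q : ℤ) ^ n - (q : ℤ) ^ ((n + 1) / 2) := by
  classical
  have : NeZero q := ⟨by omega⟩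
  set W := (range m).image (fun i : ℕ => window s n i)
  have hW : #W = m := by
    rw [card_image_of_injOn hS.1.injOn_window, card_range]
  have hcount := two_mul_card_add_pow_le_of_forall_ne_tupRev W (by
    simp only [W, mem_image]
    rintro _ ⟨i, -, rfl⟩ _ ⟨j, -, rfl⟩
    exact hS.2 i j)
  rw [hW] at hcount
  have hcast : ((2 * m + q ^ ((n + 1) / 2) : ℕ) : ℤ) ≤ ((q ^ n : ℕ) : ℤ) := by
    exact_mod_cast hcount
  push_cast at hcast
  linarith

/-- The period of any orientable sequence of order `n` over `ℤ_q` is at most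
`(q^n - q^⌈n/2⌉)/2`. -/
theorem period_le_of_orientable {q n m : ℕ} (hq : 2 ≤ q) (hn : 1 ≤ n)
    (s : ℤ → ZMod q) (hS : IsOS s n m) :
    2 * (m : ℤ) ≤ (q : ℤ) ^ n - (q : ℤ) ^ ((n + 1) / 2) :=
  period_le_of_orientable_general hq s hS
end

section
/- Let q ≥ 2, n ≥ 2 and r ≥ 1 be integers. Suppose v is a symmetric (n-1)-tuple over ℤ_q, w is a symmetric (n-2)-tuple over ℤ_q, and v and w are not both uniform. Then L_n(v) ∩ L_n(w) = ∅, where for an (n-r)-tuple x over ℤ_q, L_n(x) denotes the set of n-tuples over ℤ_q whose first n-r entries equal x. -/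
open OSeq
/-- If `v` is a symmetric `(n-1)`-tuple, `w` is a symmetric `(n-2)`-tuple and
they are not both uniform, then `L_n(v) ∩ L_n(w) = ∅`. -/
theorem Lset_disjoint {q n : ℕ} (hq : 2 ≤ q) (hn : 2 ≤ n)
    (v : Fin (n - 1) → ZMod q) (w : Fin (n - 2) → ZMod q)
    (hv : Symm v) (hw : Symm w) (h : ¬(Uniform v ∧ Uniform w)) :
    Lset n 1 v ∩ Lset n 2 w = ∅ := by
  ext u
  simp only [Set.mem_inter_iff, Set.mem_empty_iff_false, iff_false]
  rintro ⟨h1, h2⟩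
  apply h
  have hn1 : 0 < n - 1 := by omega
  -- entries of v and w agree where both defined
  have hvw : ∀ k : ℕ, (hk : k < n - 2) → v ⟨k, by omega⟩ = w ⟨k, hk⟩ := by
    intro k hk
    have e1 := h1 ⟨k, by omega⟩
    have e2 := h2 ⟨k, hk⟩
    have : (Fin.castLE (Nat.sub_le n 1) (⟨k, by omega⟩ : Fin (n-1)))
        = (Fin.castLE (Nat.sub_le n 2) (⟨k, hk⟩ : Fin (n-2))) := by
      apply Fin.ext; rfl
    rw [this] at e1
    rw [← e1, e2]
  have key : ∀ j : ℕ, (hj : j < n - 1) → v ⟨j, hj⟩ = v ⟨0, hn1⟩ := by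
    intro j
    induction j with
    | zero => intro hj; rfl
    | succ k ih =>
      intro hj
      have hk : k < n - 1 := by omega
      rw [← ih hk]
      have hlt : n - 3 - k < n - 2 := by omega
      have e1 := hv ⟨k+1, hj⟩
      have hrev1 : (⟨k+1, hj⟩ : Fin (n-1)).rev = ⟨n - 3 - k, by omega⟩ := by
        apply Fin.ext; simp [Fin.rev]; omega
      rw [hrev1] at e1
      have e2 := hw ⟨n - 3 - k, hlt⟩
      have hrev2 : (⟨n - 3 - k, hlt⟩ : Fin (n-2)).rev = ⟨k, by omega⟩ := by
        apply Fin.ext; simp [Fin.rev]; omega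
      rw [hrev2] at e2
      rw [e1, hvw _ hlt, e2, ← hvw k (by omega)]
  constructor
  · exact ⟨v ⟨0, hn1⟩, fun i => key i.1 i.2⟩
  · refine ⟨v ⟨0, hn1⟩, fun i => ?_⟩
    rw [← hvw i.1 i.2]
    exact key i.1 (by omega)
end

section
/- Let q ≥ 3 be an odd integer and n ≥ 6 an even integer. Then the period of any orientable sequence of order n over ℤ_q is at most (q^n − 2q^{n/2} − q^{(n-2)/2} + 2q)/2. -/
open OSeq

/-!
Count the `q ^ n` tuples of length `n`. The windows of an orientable sequence, their reverses
and the palindromes are pairwise disjoint, which accounts for `2m + q^{n/2}` tuples. For a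
palindrome `p` of length `n - 1`, the windows `(x, p)` and the windows `(p, y)` are equinumerous
(each occurrence of `p` is preceded and followed by exactly one symbol), while `(p, x)` is the
reverse of `(x, p)`; as `q` is odd, some `x` has neither `(x, p)` nor `(p, x)` among the windows.
For the at least `q^{n/2} - q` non-constant `p`, these tuples `(x, p)` and their reverses are
further non-palindromic tuples that are neither windows nor reversed windows, and the two
families overlap only in tuples of period two, of which there are at most `q^2`.
-/

namespace OSeq

open Finset
open scoped Classical

variable {q : ℕ}

section Tuples

variable {n : ℕ}

theorem tupRev_tupRev (u : Fin n → ZMod q) : tupRev (tupRev u) = u := by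
  funext i
  simp [tupRev]

theorem tupRev_injective : Function.Injective (tupRev : (Fin n → ZMod q) → Fin n → ZMod q) :=
  Function.LeftInverse.injective tupRev_tupRev

theorem tupRev_cons (x : ZMod q) (p : Fin n → ZMod q) :
    tupRev (Fin.cons x p : Fin (n + 1) → ZMod q) = Fin.snoc (tupRev p) x :=
  Fin.cons_comp_rev x p

theorem symm_iff_tupRev_eq {u : Fin n → ZMod q} : Symm u ↔ tupRev u = u := by
  simp only [Symm, tupRev, funext_iff, eq_comm]

theorem Symm.of_tupRev {u : Fin n → ZMod q} (hu : Symm (tupRev u)) : Symm u := by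
  have h := symm_iff_tupRev_eq.1 hu
  rw [tupRev_tupRev] at h
  exact symm_iff_tupRev_eq.2 h.symm

theorem Symm.tupRev_cons_eq_snoc {p : Fin n → ZMod q} (hp : Symm p) (x : ZMod q) :
    tupRev (Fin.cons x p : Fin (n + 1) → ZMod q) = Fin.snoc p x := by
  rw [tupRev_cons, symm_iff_tupRev_eq.1 hp]

theorem Symm.uniform_of_symm_cons {p : Fin n → ZMod q} {x : ZMod q} (hp : Symm p)
    (hxp : Symm (Fin.cons x p : Fin (n + 1) → ZMod q)) : Uniform p := by
  have hsc : Fin.snoc p x = (Fin.cons x p : Fin (n + 1) → ZMod q) := by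
    rw [← hp.tupRev_cons_eq_snoc, symm_iff_tupRev_eq.1 hxp]
  refine ⟨x, fun ⟨i, hi⟩ => ?_⟩
  induction i with
  | zero =>
    have h := congrFun hsc (Fin.castSucc ⟨0, hi⟩)
    rwa [Fin.snoc_castSucc] at h
  | succ i ih =>
    have h := congrFun hsc (Fin.castSucc ⟨i + 1, hi⟩)
    rwa [Fin.snoc_castSucc, show Fin.castSucc ⟨i + 1, hi⟩ = Fin.succ ⟨i, by omega⟩ from rfl,
      Fin.cons_succ, ih] at h

theorem apply_eq_apply_mod_two_of_symm_tail_of_symm_init {k : ℕ} {u : Fin (k + 2) → ZMod q}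
    (htail : Symm (Fin.tail u)) (hinit : Symm (Fin.init u)) (i : ℕ) (hi : i < k + 2) :
    u ⟨i, hi⟩ = u ⟨i % 2, by omega⟩ := by
  induction i using Nat.strong_induction_on with
  | _ i ih =>
    rcases Nat.lt_or_ge i 2 with hi2 | hi2
    · congr; omega
    obtain ⟨j, rfl⟩ : ∃ j, i = j + 2 := ⟨i - 2, by omega⟩
    -- both `u (j + 2)` and `u j` equal `u (k - j)`, by the two palindromes
    have h1 := htail ⟨j + 1, by omega⟩
    have h2 := hinit ⟨j, by omega⟩
    simp only [Fin.tail, Fin.init] at h1 h2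
    have hmid : (⟨j + 1, by omega⟩ : Fin (k + 1)).rev.succ =
        (⟨j, by omega⟩ : Fin (k + 1)).rev.castSucc := by
      ext
      simp only [Fin.val_succ, Fin.val_rev, Fin.val_castSucc]
      omega
    rw [hmid, ← h2] at h1
    rw [show (⟨j + 2, hi⟩ : Fin (k + 2)) = (⟨j + 1, by omega⟩ : Fin (k + 1)).succ from rfl, h1,
      show (⟨j, by omega⟩ : Fin (k + 1)).castSucc = ⟨j, by omega⟩ from rfl, ih j (by omega)]
    congr 2
    omega

end Tuples

theorem card_symm_tail_symm_init_le [NeZero q] (k : ℕ) :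
    #{u : Fin (k + 2) → ZMod q | Symm (Fin.tail u) ∧ Symm (Fin.init u)} ≤ q ^ 2 := by
  calc _ ≤ #(univ : Finset (ZMod q × ZMod q)) := by
        refine card_le_card_of_injOn (fun u => (u 0, u 1)) (fun _ _ => mem_univ _) ?_
        rintro u hu v hv huv
        simp only [coe_filter, mem_univ, true_and, Set.mem_ofPred, Prod.mk.injEq] at hu hv huv
        funext ⟨i, hi⟩
        rw [apply_eq_apply_mod_two_of_symm_tail_of_symm_init hu.1 hu.2,
          apply_eq_apply_mod_two_of_symm_tail_of_symm_init hv.1 hv.2]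
        rcases Nat.mod_two_eq_zero_or_one i with h | h <;> simp only [h]
        exacts [huv.1, huv.2]
    _ = q ^ 2 := by simp [sq]

theorem pow_le_card_symm [NeZero q] (n : ℕ) :
    q ^ ((n + 1) / 2) ≤ #{u : Fin n → ZMod q | Symm u} := by
  calc q ^ ((n + 1) / 2) = #(univ : Finset (Fin ((n + 1) / 2) → ZMod q)) := by simp
    _ ≤ _ := by
      refine card_le_card_of_injOn
        (fun v (k : Fin n) => v ⟨min k (n - 1 - k), by omega⟩)
        (fun v _ => mem_filter.2 ⟨mem_univ _, fun k => ?_⟩) ?_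
      · exact congrArg v (Fin.ext (by simp only [Fin.val_rev]; omega))
      · intro v _ w _ hvw
        funext ⟨i, hi⟩
        have := congrFun hvw ⟨i, by omega⟩
        simp only at this
        convert this using 3 <;> omega

theorem card_uniform_le [NeZero q] (n : ℕ) : #{u : Fin n → ZMod q | Uniform u} ≤ q := by
  calc _ ≤ #((univ : Finset (ZMod q)).image fun c _ => c) := by
        refine card_le_card fun u hu => ?_
        obtain ⟨c, hc⟩ := (mem_filter.1 hu).2
        exact mem_image.2 ⟨c, mem_univ _, funext fun i => (hc i).symm⟩
    _ ≤ q := card_image_le.trans (by simp)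

theorem pow_le_card_symm_not_uniform_add [NeZero q] (n : ℕ) :
    q ^ ((n + 1) / 2) ≤ #{u : Fin n → ZMod q | Symm u ∧ ¬Uniform u} + q := by
  have hsplit := card_filter_add_card_filter_not (s := {u : Fin n → ZMod q | Symm u})
    (fun u => Uniform u)
  have hU : #{u : Fin n → ZMod q | Symm u ∧ Uniform u} ≤ q :=
    (card_le_card (monotone_filter_right _ fun _ _ => And.right)).trans (card_uniform_le n)
  simp only [filter_filter] at hsplit
  have := pow_le_card_symm (q := q) n
  omega

theorem window_succ_eq_cons (s : ℤ → ZMod q) (k : ℕ) (i : ℤ) :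
    window s (k + 1) i = Fin.cons (s i) (window s k (i + 1)) := by
  funext j
  refine Fin.cases ?_ (fun j => ?_) j
  · simp [window]
  · simp only [window, Fin.cons_succ, Fin.val_succ]
    congr 1
    push_cast
    ring

theorem window_succ_eq_snoc (s : ℤ → ZMod q) (k : ℕ) (i : ℤ) :
    window s (k + 1) i = Fin.snoc (window s k i) (s (i + k)) := by
  funext j
  refine Fin.lastCases ?_ (fun j => ?_) j
  · simp [window]
  · simp [window]

namespace IsNWindowSeq

variable {s : ℤ → ZMod q} {n m : ℕ}

theorem apply_add_eq_of_window_eq (hW : IsNWindowSeq s n m) {i j : ℤ}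
    (h : window s n i = window s n j) (c : ℤ) : s (i + c) = s (j + c) := by
  obtain ⟨d, hd⟩ := (hW.2 i j h).dvd
  have hper : Function.Periodic s (m : ℤ) := hW.1.2.1
  rw [show j + c = i + c + d * m by linear_combination hd]
  simpa using (hper.int_mul d (i + c)).symm

theorem le_card_appearsIn [NeZero q] (hW : IsNWindowSeq s n m) :
    m ≤ #{u : Fin n → ZMod q | AppearsIn s n u} := by
  calc m = #(range m) := (card_range m).symm
    _ ≤ _ := by
      refine card_le_card_of_injOn (fun i : ℕ => window s n i)
        (fun i _ => mem_filter.2 ⟨mem_univ _, i, rfl⟩) fun i hi j hj hij => ?_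
      exact Nat.ModEq.eq_of_lt_of_lt (Int.natCast_modEq_iff.1 (hW.2 i j hij))
        (mem_range.1 hi) (mem_range.1 hj)

theorem card_cons_le_card_snoc [NeZero q] {k : ℕ} (hW : IsNWindowSeq s (k + 1) m)
    (p : Fin k → ZMod q) :
    #{x | AppearsIn s (k + 1) (Fin.cons x p)} ≤ #{y | AppearsIn s (k + 1) (Fin.snoc p y)} := by
  have hA : ∀ x ∈ ({x | AppearsIn s (k + 1) (Fin.cons x p)} : Finset (ZMod q)),
      ∃ i, window s (k + 1) i = Fin.cons x p := fun x hx => (mem_filter.1 hx).2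
  choose! i hi using hA
  have hnext : ∀ x ∈ ({x | AppearsIn s (k + 1) (Fin.cons x p)} : Finset (ZMod q)),
      s (i x) = x ∧ window s (k + 1) (i x + 1) = Fin.snoc p (s (i x + 1 + k)) := by
    intro x hx
    have h := hi x hx
    rw [window_succ_eq_cons, Fin.cons_inj] at h
    rw [window_succ_eq_snoc, h.2]
    exact ⟨h.1, rfl⟩
  refine card_le_card_of_injOn (fun x => s (i x + 1 + k))
    (fun x hx => mem_filter.2 ⟨mem_univ _, _, (hnext x hx).2⟩) fun x hx x' hx' hxx' => ?_
  have hw : window s (k + 1) (i x + 1) = window s (k + 1) (i x' + 1) := by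
    rw [(hnext x hx).2, (hnext x' hx').2]
    exact congrArg _ hxx'
  have hprev := hW.apply_add_eq_of_window_eq hw (-1)
  simp only [add_neg_cancel_right] at hprev
  rw [← (hnext x hx).1, ← (hnext x' hx').1, hprev]

theorem card_snoc_le_card_cons [NeZero q] {k : ℕ} (hW : IsNWindowSeq s (k + 1) m)
    (p : Fin k → ZMod q) :
    #{y | AppearsIn s (k + 1) (Fin.snoc p y)} ≤ #{x | AppearsIn s (k + 1) (Fin.cons x p)} := by
  have hB : ∀ y ∈ ({y | AppearsIn s (k + 1) (Fin.snoc p y)} : Finset (ZMod q)),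
      ∃ i, window s (k + 1) i = Fin.snoc p y := fun y hy => (mem_filter.1 hy).2
  choose! i hi using hB
  have hprev : ∀ y ∈ ({y | AppearsIn s (k + 1) (Fin.snoc p y)} : Finset (ZMod q)),
      s (i y - 1 + (k + 1 : ℕ)) = y ∧ window s (k + 1) (i y - 1) = Fin.cons (s (i y - 1)) p := by
    intro y hy
    have h := hi y hy
    rw [window_succ_eq_snoc, Fin.snoc_inj] at h
    refine ⟨?_, by rw [window_succ_eq_cons, sub_add_cancel, h.1]⟩
    convert h.2 using 2
    push_cast
    ring
  refine card_le_card_of_injOn (fun y => s (i y - 1))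
    (fun y hy => mem_filter.2 ⟨mem_univ _, _, (hprev y hy).2⟩) fun y hy y' hy' hyy' => ?_
  have hw : window s (k + 1) (i y - 1) = window s (k + 1) (i y' - 1) := by
    rw [(hprev y hy).2, (hprev y' hy').2, show s (i y - 1) = s (i y' - 1) from hyy']
  rw [← (hprev y hy).1, ← (hprev y' hy').1, hW.apply_add_eq_of_window_eq hw]

theorem card_cons_eq_card_snoc [NeZero q] {k : ℕ} (hW : IsNWindowSeq s (k + 1) m)
    (p : Fin k → ZMod q) :
    #{x | AppearsIn s (k + 1) (Fin.cons x p)} = #{y | AppearsIn s (k + 1) (Fin.snoc p y)} :=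
  (hW.card_cons_le_card_snoc p).antisymm (hW.card_snoc_le_card_cons p)

end IsNWindowSeq

def UnusedAsymm (s : ℤ → ZMod q) (n : ℕ) (u : Fin n → ZMod q) : Prop :=
  ¬AppearsIn s n u ∧ ¬AppearsIn s n (tupRev u) ∧ ¬Symm u

theorem UnusedAsymm.tupRev {s : ℤ → ZMod q} {n : ℕ} {u : Fin n → ZMod q}
    (h : UnusedAsymm s n u) : UnusedAsymm s n (tupRev u) :=
  ⟨h.2.1, by rw [tupRev_tupRev]; exact h.1, fun hs => h.2.2 hs.of_tupRev⟩

namespace IsOS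

variable {s : ℤ → ZMod q} {m : ℕ}

theorem two_mul_add_card_le [NeZero q] {n : ℕ} (hS : IsOS s n m)
    (F : Finset (Fin n → ZMod q)) (hF : ∀ u ∈ F, UnusedAsymm s n u) :
    2 * m + #{u : Fin n → ZMod q | Symm u} + #F ≤ q ^ n := by
  set W : Finset (Fin n → ZMod q) := {u | AppearsIn s n u}
  set Wr : Finset (Fin n → ZMod q) := {u | AppearsIn s n (tupRev u)}
  set S : Finset (Fin n → ZMod q) := {u | Symm u}
  have hWr : #Wr = #W := card_nbij' tupRev tupRev (fun u hu => by simpa [W, Wr] using hu)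
    (fun u hu => by simpa [W, Wr, tupRev_tupRev] using hu)
    (fun u _ => tupRev_tupRev u) (fun u _ => tupRev_tupRev u)
  have hWWr : Disjoint W Wr := by
    refine disjoint_left.2 fun u hu hur => ?_
    obtain ⟨i, rfl⟩ := (mem_filter.1 hu).2
    obtain ⟨j, hj⟩ := (mem_filter.1 hur).2
    exact hS.2 j i hj
  have hWS : Disjoint (W ∪ Wr) S := by
    refine disjoint_left.2 fun u hu hus => ?_
    have hrev : tupRev u = u := symm_iff_tupRev_eq.1 (mem_filter.1 hus).2
    have hboth : u ∈ W ↔ u ∈ Wr := by simp [W, Wr, hrev]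
    rcases mem_union.1 hu with h | h
    · exact disjoint_left.1 hWWr h (hboth.1 h)
    · exact disjoint_left.1 hWWr (hboth.2 h) h
  have hWF : Disjoint (W ∪ Wr ∪ S) F := by
    refine disjoint_right.2 fun u hu hu' => ?_
    obtain ⟨h1, h2, h3⟩ := hF u hu
    simp only [W, Wr, S, mem_union, mem_filter, mem_univ, true_and] at hu'
    tauto
  calc 2 * m + #S + #F ≤ #W + #Wr + #S + #F := by
        have hmW : m ≤ #W := hS.1.le_card_appearsIn
        omega
    _ = #(W ∪ Wr ∪ S ∪ F) := by
        rw [card_union_of_disjoint hWF, card_union_of_disjoint hWS, card_union_of_disjoint hWWr]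
    _ ≤ q ^ n := (card_le_univ _).trans (by simp)

theorem exists_not_appearsIn_cons_snoc {k : ℕ} (hS : IsOS s (k + 1) m) (hq : Odd q)
    {p : Fin k → ZMod q} (hp : Symm p) :
    ∃ x, ¬AppearsIn s (k + 1) (Fin.cons x p) ∧ ¬AppearsIn s (k + 1) (Fin.snoc p x) := by
  have : NeZero q := ⟨hq.pos.ne'⟩
  set A : Finset (ZMod q) := {x | AppearsIn s (k + 1) (Fin.cons x p)}
  set B : Finset (ZMod q) := {y | AppearsIn s (k + 1) (Fin.snoc p y)}
  have hAB : Disjoint A B := by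
    refine disjoint_left.2 fun x hx hx' => ?_
    obtain ⟨i, hi⟩ := (mem_filter.1 hx).2
    obtain ⟨j, hj⟩ := (mem_filter.1 hx').2
    exact hS.2 j i (by rw [hi, hj, hp.tupRev_cons_eq_snoc])
  by_contra! hcover
  have hunion : A ∪ B = univ := eq_univ_of_forall fun x => by
    by_cases hx : AppearsIn s (k + 1) (Fin.cons x p)
    · exact mem_union_left _ (mem_filter.2 ⟨mem_univ _, hx⟩)
    · exact mem_union_right _ (mem_filter.2 ⟨mem_univ _, hcover x hx⟩)
  have hcard : q = 2 * #A := by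
    rw [two_mul]
    nth_rewrite 2 [hS.1.card_cons_eq_card_snoc p]
    rw [← card_union_of_disjoint hAB, hunion, card_univ, ZMod.card]
  exact Nat.not_even_iff_odd.2 hq ⟨#A, by omega⟩

theorem exists_finset_unusedAsymm {k : ℕ} (hS : IsOS s (k + 2) m) (hq : Odd q) :
    ∃ F : Finset (Fin (k + 2) → ZMod q), (∀ u ∈ F, UnusedAsymm s (k + 2) u) ∧
      2 * q ^ ((k + 2) / 2) ≤ #F + 2 * q + q ^ 2 := by
  have : NeZero q := ⟨hq.pos.ne'⟩
  choose! x hx using fun (p : Fin (k + 1) → ZMod q) (hp : Symm p) =>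
    hS.exists_not_appearsIn_cons_snoc hq hp
  set P : Finset (Fin (k + 1) → ZMod q) := {p | Symm p ∧ ¬Uniform p}
  set E := P.image fun p => (Fin.cons (x p) p : Fin (k + 2) → ZMod q)
  have hE : ∀ u ∈ E, UnusedAsymm s (k + 2) u := by
    intro u hu
    obtain ⟨p, hp, rfl⟩ := mem_image.1 hu
    obtain ⟨hsymm, hunif⟩ := (mem_filter.1 hp).2
    refine ⟨(hx p hsymm).1, ?_, fun h => hunif (hsymm.uniform_of_symm_cons h)⟩
    rw [hsymm.tupRev_cons_eq_snoc]
    exact (hx p hsymm).2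
  have hEP : #E = #P := card_image_of_injective _ fun p p' h => (Fin.cons_inj.1 h).2
  have hErE : #(E.image tupRev) = #E := card_image_of_injective _ tupRev_injective
  have hinter : #(E ∩ E.image tupRev) ≤ q ^ 2 := by
    refine (card_le_card fun u hu => ?_).trans (card_symm_tail_symm_init_le k)
    obtain ⟨hu, hur⟩ := mem_inter.1 hu
    obtain ⟨p, hp, rfl⟩ := mem_image.1 hu
    obtain ⟨v, hv, hvu⟩ := mem_image.1 hur
    obtain ⟨p', hp', rfl⟩ := mem_image.1 hv
    have hp'symm := (mem_filter.1 hp').2.1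
    rw [hp'symm.tupRev_cons_eq_snoc] at hvu
    refine mem_filter.2 ⟨mem_univ _, ?_, ?_⟩
    · rw [Fin.tail_cons]
      exact (mem_filter.1 hp).2.1
    · rw [← hvu, Fin.init_snoc]
      exact hp'symm
  refine ⟨E ∪ E.image tupRev, fun u hu => ?_, ?_⟩
  · rcases mem_union.1 hu with h | h
    · exact hE u h
    · obtain ⟨v, hv, rfl⟩ := mem_image.1 h
      exact (hE v hv).tupRev
  · have hunion := card_union_add_card_inter E (E.image tupRev)
    have hP : q ^ ((k + 2) / 2) ≤ #P + q := pow_le_card_symm_not_uniform_add (k + 1)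
    omega

end IsOS

end OSeq

/-- For odd `q ≥ 3` and even `n ≥ 6`, the period of any orientable sequence of
order `n` over `ℤ_q` is at most `(q^n - 2q^{n/2} - q^{(n-2)/2} + 2q)/2`. -/
theorem period_le_of_orientable_odd_q_even_n {q n m : ℕ} (hq : 3 ≤ q) (hqodd : Odd q)
    (hn : 6 ≤ n) (hneven : Even n) (s : ℤ → ZMod q) (hS : IsOS s n m) :
    2 * (m : ℤ) ≤ (q : ℤ) ^ n - 2 * (q : ℤ) ^ (n / 2) - (q : ℤ) ^ ((n - 2) / 2)
      + 2 * q := by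
  have : NeZero q := ⟨by omega⟩
  obtain ⟨j, rfl⟩ : ∃ j, n = 2 * j + 2 := ⟨n / 2 - 1, by have := Nat.even_iff.1 hneven; omega⟩
  obtain ⟨F, hF, hFcard⟩ := hS.exists_finset_unusedAsymm hqodd
  have hcount := hS.two_mul_add_card_le F hF
  have hsymm := pow_le_card_symm (q := q) (2 * j + 2)
  have hpow : q ^ j + q ^ 2 ≤ q ^ (j + 1) := by
    have h2 : q ^ 2 ≤ q ^ j := Nat.pow_le_pow_right (by omega) (by omega)
    have h3 : 3 * q ^ j ≤ q ^ (j + 1) := by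
      rw [pow_succ']
      exact Nat.mul_le_mul_right _ hq
    omega
  rw [show (2 * j + 2) / 2 = j + 1 by omega] at hFcard
  rw [show (2 * j + 2 + 1) / 2 = j + 1 by omega] at hsymm
  have key : 2 * m + 2 * q ^ (j + 1) + q ^ j ≤ q ^ (2 * j + 2) + 2 * q := by omega
  rw [show (2 * j + 2) / 2 = j + 1 by omega, show (2 * j + 2 - 2) / 2 = j by omega]
  have hkey := (Nat.cast_le (α := ℤ)).2 key
  push_cast at hkey
  linarith
end

section
/- Let q ≥ 2 and n ≥ 1 be integers, and suppose S = (s_i) is an orientable sequence of order n and period m over ℤ_q. Suppose w_q(S), the weight of S modulo q, has additive order h in ℤ_q. Then every T ∈ D^{-1}(S) is a negative orientable sequence of order n+1 of period hm; any two elements of D^{-1}(S) are translates of one another and each is a shift of the other by a multiple of m or they are (n+1)-window disjoint; and for any T, T' ∈ D^{-1}(S) and any i, j, t_{n+1}(i) ≠ −(t'_{n+1}(j))^R unless T = T'. In particular D^{-1}(S) consists of h shifts of each of q/h mutually no-disjoint negative orientable sequences of order n+1 and period hm which are translates of one another. -/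
section Aux

open OSeq

variable {q : ℕ}

lemma D_step {t s : ℤ → ZMod q} (h : D t = s) (i : ℤ) : t (i + 1) = t i + s i := by
  have := congrFun h i
  simp only [D] at this
  rw [← this]; ring

lemma t_add_nat {t s : ℤ → ZMod q} (h : D t = s) (i : ℤ) (k : ℕ) :
    t (i + k) = t i + ∑ j ∈ Finset.range k, s (i + j) := by
  induction k with
  | zero => simp
  | succ k ih =>
    have e : (i + ((k+1 : ℕ) : ℤ)) = (i + k) + 1 := by push_cast; ring
    rw [e, D_step h, ih, Finset.sum_range_succ, add_assoc]

lemma sum_window_const {s : ℤ → ZMod q} {m : ℕ} (hper : ∀ i, s (i + (m:ℤ)) = s i) (i : ℤ) :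
    ∑ j ∈ Finset.range m, s (i + j) = wq s m := by
  have key : ∀ i : ℤ, ∑ j ∈ Finset.range m, s ((i+1) + j) = ∑ j ∈ Finset.range m, s (i + j) := by
    intro i
    have h1 : ∑ j ∈ Finset.range m, s ((i+1) + (j:ℤ))
        = ∑ j ∈ Finset.range m, s (i + (((j+1) : ℕ) : ℤ)) := by
      apply Finset.sum_congr rfl; intro j _; congr 1; push_cast; ring
    have h2 := Finset.sum_range_succ' (fun j : ℕ => s (i + (j:ℤ))) m
    have h3 := Finset.sum_range_succ (fun j : ℕ => s (i + (j:ℤ))) m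
    have hm : s (i + (m:ℤ)) = s (i + ((0:ℕ):ℤ)) := by
      rw [hper i]; norm_num
    rw [h1]
    have := h2.symm.trans h3
    -- this : (∑ j ∈ range m, s (i + ((j+1:ℕ):ℤ))) + s (i + ((0:ℕ):ℤ)) = (∑ j ∈ range m, s (i+j)) + s (i+m)
    rw [hm] at this
    exact add_right_cancel this
  induction i using Int.induction_on with
  | zero => simp only [wq]; apply Finset.sum_congr rfl; intro j _; rw [zero_add]
  | succ k ih => rw [show ((k:ℤ)+1) = (k:ℤ) + 1 from rfl, key, ih]
  | pred k ih => rw [← ih, ← key (-(k:ℤ) - 1)]; norm_num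
lemma t_add_period {t s : ℤ → ZMod q} {m : ℕ} (h : D t = s) (hper : ∀ i, s (i + (m:ℤ)) = s i)
    (i : ℤ) : t (i + m) = t i + wq s m := by
  rw [t_add_nat h, sum_window_const hper]

lemma t_add_zsmul {t s : ℤ → ZMod q} {m : ℕ} (h : D t = s) (hper : ∀ i, s (i + (m:ℤ)) = s i)
    (α : ℤ) (i : ℤ) : t (i + α * m) = t i + α • wq s m := by
  induction α using Int.induction_on with
  | zero => simp
  | succ k ih =>
    have e : i + ((k:ℤ)+1) * m = (i + k * m) + m := by ring
    rw [e, t_add_period h hper, ih, add_zsmul, one_zsmul, add_assoc]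
  | pred k ih =>
    have e : i + (-(k:ℤ)) * m = (i + (-(k:ℤ)-1) * m) + m := by ring
    rw [e, t_add_period h hper] at ih
    have : t (i + (-(k:ℤ)-1) * m) = t i + (-(k:ℤ)) • wq s m - wq s m := by
      rw [← ih]; ring
    rw [this, sub_zsmul, one_zsmul]; ring

lemma s_period_mul {s : ℤ → ZMod q} {p : ℕ} (hper : ∀ i, s (i + (p:ℤ)) = s i) (c : ℤ) (i : ℤ) :
    s (i + (p:ℤ) * c) = s i := by
  induction c using Int.induction_on with
  | zero => simp
  | succ k ih =>
    have e : i + (p:ℤ) * ((k:ℤ)+1) = (i + p * k) + p := by ring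
    rw [e, hper, ih]
  | pred k ih =>
    have e : i + (p:ℤ) * (-(k:ℤ)) = (i + p * (-(k:ℤ)-1)) + p := by ring
    rw [e, hper] at ih
    exact ih

lemma isPeriod_dvd {s : ℤ → ZMod q} {m m' : ℕ} (hm : IsPeriod s m) (hm' : 0 < m')
    (hp : ∀ i, s (i + (m':ℤ)) = s i) : m ∣ m' := by
  obtain ⟨hm0, hper, hmin⟩ := hm
  set g := Nat.gcd m m' with hg
  have hg0 : 0 < g := Nat.gcd_pos_of_pos_left m' hm0
  have hgper : ∀ i, s (i + (g:ℤ)) = s i := by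
    intro i
    have hbez : (g : ℤ) = m * Nat.gcdA m m' + m' * Nat.gcdB m m' := Nat.gcd_eq_gcd_ab m m'
    rw [hbez, show i + ((m:ℤ) * Nat.gcdA m m' + (m':ℤ) * Nat.gcdB m m')
      = (i + (m':ℤ) * Nat.gcdB m m') + (m:ℤ) * Nat.gcdA m m' by ring,
      s_period_mul hper, s_period_mul hp]
  have h1 : m ≤ g := hmin g hg0 hgper
  have h2 : g ≤ m := Nat.le_of_dvd hm0 (Nat.gcd_dvd_left m m')
  have : g = m := le_antisymm h2 h1
  rw [← this]
  exact Nat.gcd_dvd_right m m'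

lemma translate_of_D_eq {t t' s : ℤ → ZMod q} (h : D t = s) (h' : D t' = s) (i : ℤ) :
    t' i = t i + (t' 0 - t 0) := by
  induction i using Int.induction_on with
  | zero => ring
  | succ k ih => rw [D_step h' (k:ℤ), D_step h (k:ℤ), ih]; ring
  | pred k ih =>
    have a := D_step h' (-(k:ℤ) - 1)
    have b := D_step h (-(k:ℤ) - 1)
    rw [show (-(k:ℤ) - 1) + 1 = -(k:ℤ) by ring] at a b
    rw [a, b] at ih
    linear_combination ih

lemma window_eq_of {t t' s : ℤ → ZMod q} {n : ℕ} (h : D t = s) (h' : D t' = s) {i j : ℤ}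
    (hw : window t (n+1) i = window t' (n+1) j) :
    t i = t' j ∧ window s n i = window s n j := by
  constructor
  · have h0 := congrFun hw ⟨0, Nat.succ_pos n⟩
    simpa [window] using h0
  · funext k
    have h1 := congrFun hw ⟨k.1, by omega⟩
    have h2 := congrFun hw ⟨k.1 + 1, by omega⟩
    simp only [window] at h1 h2 ⊢
    have st := D_step h (i + (k.1 : ℤ))
    have st' := D_step h' (j + (k.1 : ℤ))
    have ei : i + (k.1:ℤ) + 1 = i + (((k.1 + 1 : ℕ)) : ℤ) := by push_cast; ring
    have ej : j + (k.1:ℤ) + 1 = j + (((k.1 + 1 : ℕ)) : ℤ) := by push_cast; ring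
    rw [ei] at st; rw [ej] at st'
    have : s (i + (k.1:ℤ)) = t (i + ((k.1 + 1 : ℕ) : ℤ)) - t (i + (k.1:ℤ)) := by
      rw [st]; ring
    rw [this, h1, h2, st']
    ring

lemma window_neg_of {t t' s : ℤ → ZMod q} {n : ℕ} (h : D t = s) (h' : D t' = s) {i j : ℤ}
    (hw : window t (n+1) i = - tupRev (window t' (n+1) j)) :
    window s n i = tupRev (window s n j) := by
  funext k
  have h1 := congrFun hw ⟨k.1, by omega⟩
  have h2 := congrFun hw ⟨k.1 + 1, by omega⟩
  simp only [window, tupRev, Pi.neg_apply, Fin.rev] at h1 h2 ⊢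
  -- h1 : t (i + k) = - t' (j + (n + 1 - (k+1)))
  -- h2 : t (i + (k+1)) = - t' (j + (n + 1 - (k+1+1)))
  -- goal : s (i + k) = s (j + (n - (k+1)))
  have hk := k.2
  have e1 : ((n + 1 - (k.1 + 1) : ℕ) : ℤ) = ((n - (k.1 + 1) : ℕ) : ℤ) + 1 := by omega
  have e2 : ((n + 1 - (k.1 + 1 + 1) : ℕ) : ℤ) = ((n - (k.1 + 1) : ℕ) : ℤ) := by omega
  rw [e1] at h1
  rw [e2] at h2
  have st := D_step h (i + (k.1 : ℤ))
  have st' := D_step h' (j + ((n - (k.1 + 1) : ℕ) : ℤ))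
  have ei : i + (k.1:ℤ) + 1 = i + (((k.1 + 1 : ℕ)) : ℤ) := by push_cast; ring
  rw [ei] at st
  -- st : t (i + (k+1)) = t (i + k) + s (i + k)
  -- st' : t' (j + a + 1) = t' (j + a) + s (j + a)  where a = n - (k+1)
  have st'' : t' (j + (((n - (k.1 + 1) : ℕ) : ℤ) + 1))
      = t' (j + ((n - (k.1 + 1) : ℕ) : ℤ)) + s (j + ((n - (k.1 + 1) : ℕ) : ℤ)) := by
    rw [← add_assoc]; exact st'
  rw [h1, h2, st''] at st
  linear_combination -st
end Aux

open OSeq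
/-- If `S` is an orientable sequence of order `n` and period `m` over `ℤ_q` and
`w_q(S)` has additive order `h` in `ℤ_q`, then every `T ∈ D⁻¹(S)` is a negative
orientable sequence of order `n+1` and period `hm`; any two elements of `D⁻¹(S)`
are translates of one another and each is a shift of the other by a multiple of
`m` or they are `(n+1)`-window disjoint; distinct elements of `D⁻¹(S)` are
mutually negative orientable; and `D⁻¹(S)` consists of `h` shifts of each of
`q/h` mutually no-disjoint negative orientable sequences of order `n+1` and
period `hm` which are translates of one another. -/
theorem Dinv_of_orientable {q n m h : ℕ} (hq : 2 ≤ q) (hn : 1 ≤ n)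
    (s : ℤ → ZMod q) (hS : IsOS s n m) (hh : addOrderOf (wq s m) = h) :
    (∀ t : ℤ → ZMod q, D t = s → IsNOS t (n + 1) (h * m)) ∧
    (∀ t t' : ℤ → ZMod q, D t = s → D t' = s →
      IsTranslate t t' ∧
        ((∃ α : ℤ, ∀ i : ℤ, t' i = t (i + α * (m : ℤ))) ∨ WindowDisjoint (n + 1) t t')) ∧
    (∀ t t' : ℤ → ZMod q, D t = s → D t' = s → t ≠ t' →
      ∀ i j : ℤ, window t (n + 1) i ≠ - tupRev (window t' (n + 1) j)) ∧
    (∃ F : Fin (q / h) → ℤ → ZMod q,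
      (∀ k, D (F k) = s ∧ IsNOS (F k) (n + 1) (h * m)) ∧
      (∀ k k', k ≠ k' → NODisjoint (n + 1) (F k) (F k')) ∧
      (∀ k k', IsTranslate (F k) (F k')) ∧
      (∀ t : ℤ → ZMod q, D t = s ↔
        ∃ (k : Fin (q / h)) (α : Fin h), t = shift (F k) ((α : ℕ) * (m : ℤ))) ∧
      Function.Injective
        (fun p : Fin (q / h) × Fin h => shift (F p.1) ((p.2 : ℕ) * (m : ℤ)))) := by
  haveI : NeZero q := ⟨by omega⟩
  obtain ⟨⟨hperS, hwinS⟩, hor⟩ := hS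
  obtain ⟨hm0, hsper, hsmin⟩ := hperS
  set w := wq s m with hwdef
  have hh0 : 0 < h := by rw [← hh]; exact addOrderOf_pos w
  have hhw : h • w = 0 := by rw [← hh]; exact addOrderOf_nsmul_eq_zero w
  have hdvd_iff : ∀ α : ℤ, α • w = 0 ↔ (h : ℤ) ∣ α := by
    intro α; rw [← hh]; exact addOrderOf_dvd_iff_zsmul_eq_zero.symm
  -- Claim 1 : every preimage is an NOS of order n+1 and period h*m
  have claim1 : ∀ t : ℤ → ZMod q, D t = s → IsNOS t (n + 1) (h * m) := by
    intro t ht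
    refine ⟨⟨⟨Nat.mul_pos hh0 hm0, ?_, ?_⟩, ?_⟩, ?_⟩
    · intro i
      have e : i + ((h * m : ℕ) : ℤ) = i + (h : ℤ) * m := by push_cast; ring
      rw [e, t_add_zsmul ht hsper, natCast_zsmul, ← hwdef, hhw, add_zero]
    · intro m' hm'0 hptm'
      have hsm' : ∀ i, s (i + (m' : ℤ)) = s i := by
        intro i
        have a := D_step ht i
        have b := D_step ht (i + m')
        have c := hptm' (i + 1)
        have d := hptm' i
        rw [show i + (m' : ℤ) + 1 = (i + 1) + m' by ring] at b
        rw [c, d] at b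
        linear_combination a - b
      obtain ⟨k, rfl⟩ := isPeriod_dvd ⟨hm0, hsper, hsmin⟩ hm'0 hsm'
      have hz : ((k : ℤ)) • w = 0 := by
        have h1 : t (0 + (k : ℤ) * m) = t 0 + (k : ℤ) • w := t_add_zsmul ht hsper k 0
        have h2 := hptm' 0
        rw [show ((m * k : ℕ) : ℤ) = (k : ℤ) * m by push_cast; ring] at h2
        rw [h2] at h1
        exact (left_eq_add.mp h1)
      have hk : h ∣ k := Int.natCast_dvd_natCast.mp ((hdvd_iff k).mp hz)
      obtain ⟨β, rfl⟩ := hk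
      exact Nat.le_of_dvd hm'0 ⟨β, by ring⟩
    · intro i j hwt
      obtain ⟨htij, hsw⟩ := window_eq_of ht ht hwt
      obtain ⟨α, hα⟩ := Int.ModEq.dvd (hwinS i j hsw)
      have h1 : t (i + α * m) = t i + α • w := t_add_zsmul ht hsper α i
      rw [show i + α * (m : ℤ) = j by linear_combination -hα] at h1
      rw [htij] at h1
      obtain ⟨β, hβ⟩ := (hdvd_iff α).mp (left_eq_add.mp h1)
      rw [Int.modEq_iff_dvd]
      exact ⟨β, by push_cast; linear_combination hα + (m : ℤ) * hβ⟩
    · intro i j hcon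
      exact hor i j (window_neg_of ht ht hcon)
  refine ⟨claim1, ?_, ?_, ?_⟩
  · -- pairs of preimages
    intro t t' ht ht'
    refine ⟨⟨t' 0 - t 0, fun i => translate_of_D_eq ht ht' i⟩, ?_⟩
    by_cases hd : ∀ i j : ℤ, window t (n + 1) i ≠ window t' (n + 1) j
    · exact Or.inr hd
    · push_neg at hd
      obtain ⟨i, j, hwe⟩ := hd
      obtain ⟨hte, hsw⟩ := window_eq_of ht ht' hwe
      obtain ⟨α, hα⟩ := Int.ModEq.dvd (hwinS i j hsw)
      refine Or.inl ⟨-α, fun x => ?_⟩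
      have h1 : t (x + (-α) * m) = t x + (-α) • w := t_add_zsmul ht hsper _ x
      have h2 : t (j + (-α) * m) = t j + (-α) • w := t_add_zsmul ht hsper _ j
      rw [show j + (-α) * (m : ℤ) = i by linear_combination hα] at h2
      have g1 := translate_of_D_eq ht ht' x
      have g2 := translate_of_D_eq ht ht' j
      rw [h1, g1]
      have hc : t' 0 - t 0 = (-α) • w := by linear_combination h2 - hte - g2
      rw [hc]
  · -- mutual negative orientability
    intro t t' ht ht' _ i j hcon
    exact hor i j (window_neg_of ht ht' hcon)
  · -- the structure of D⁻¹(S)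
    have hhq : h ∣ q := by
      rw [← hh]
      apply addOrderOf_dvd_of_nsmul_eq_zero
      rw [nsmul_eq_mul]
      simp [ZMod.natCast_self]
    -- base preimage t₀
    set t₀ : ℤ → ZMod q :=
      fun i => (∑ j ∈ Finset.Ico (0 : ℤ) i, s j) - ∑ j ∈ Finset.Ico i (0 : ℤ), s j with ht₀def
    have ht₀ : D t₀ = s := by
      funext i
      show t₀ (i + 1) - t₀ i = s i
      by_cases hi : 0 ≤ i
      · have e1 : Finset.Ico (i + 1) (0 : ℤ) = ∅ := Finset.Ico_eq_empty (by omega)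
        have e2 : Finset.Ico i (0 : ℤ) = ∅ := Finset.Ico_eq_empty (by omega)
        simp only [ht₀def, e1, e2, Finset.sum_empty, sub_zero]
        rw [show Finset.Ico (0 : ℤ) (i + 1) = Finset.Icc 0 i from rfl,
          ← Finset.Ico_insert_right hi, Finset.sum_insert (by simp)]
        ring
      · push_neg at hi
        have e1 : Finset.Ico (0 : ℤ) (i + 1) = ∅ := Finset.Ico_eq_empty (by omega)
        have e2 : Finset.Ico (0 : ℤ) i = ∅ := Finset.Ico_eq_empty (by omega)
        simp only [ht₀def, e1, e2, Finset.sum_empty, zero_sub]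
        rw [show Finset.Ico (i + 1) (0 : ℤ) = Finset.Ioo i 0 by ext x; simp,
          ← Finset.Ioo_insert_left hi, Finset.sum_insert (by simp)]
        ring
    -- the quotient by the subgroup generated by w
    set H := AddSubgroup.zmultiples w with hHdef
    have hcard : Nat.card (ZMod q ⧸ H) = q / h := by
      have h1 : Nat.card (ZMod q) = Nat.card (ZMod q ⧸ H) * Nat.card H :=
        AddSubgroup.card_eq_card_quotient_mul_card_addSubgroup H
      rw [hHdef, Nat.card_zmultiples, hh, Nat.card_zmod] at h1
      exact (Nat.div_eq_of_eq_mul_left hh0 h1).symm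
    let e : (ZMod q ⧸ H) ≃ Fin (q / h) := (Finite.equivFin _).trans (finCongr hcard)
    set rep : Fin (q / h) → ZMod q := fun k => Quotient.out (e.symm k) with hrepdef
    have hrep : ∀ k, (QuotientAddGroup.mk (rep k) : ZMod q ⧸ H) = e.symm k := fun k =>
      Quotient.out_eq _
    set F : Fin (q / h) → ℤ → ZMod q := fun k i => t₀ i + rep k with hFdef
    have hDF : ∀ k, D (F k) = s := by
      intro k
      funext i
      show (t₀ (i + 1) + rep k) - (t₀ i + rep k) = s i
      have := D_step ht₀ i
      rw [this]; ring
    have hFshift : ∀ (k) (α : ℤ) (i : ℤ), shift (F k) (α * (m : ℤ)) i = t₀ i + α • w + rep k := by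
      intro k α i
      show F k (i + α * m) = _
      show t₀ (i + α * m) + rep k = _
      rw [t_add_zsmul ht₀ hsper, ← hwdef]
    have hkey : ∀ (k k') (α α' : ℤ), α • w + rep k = α' • w + rep k' →
        k = k' ∧ α • w = α' • w := by
      intro k k' α α' heq
      have hm1 : (QuotientAddGroup.mk (rep k) : ZMod q ⧸ H) = QuotientAddGroup.mk (rep k') := by
        rw [QuotientAddGroup.eq]
        refine ⟨α - α', ?_⟩
        show (α - α') • w = -rep k + rep k'
        rw [sub_zsmul]
        linear_combination heq
      have hk : k = k' := by
        have := (hrep k).symm.trans (hm1.trans (hrep k'))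
        exact e.symm.injective this
      subst hk
      exact ⟨rfl, by linear_combination heq⟩
    have hsmul_inj : ∀ a b : ℕ, a < h → b < h → ((a : ℤ)) • w = ((b : ℤ)) • w → a = b := by
      have key : ∀ a b : ℕ, a ≤ b → b < h → ((a : ℤ)) • w = ((b : ℤ)) • w → a = b := by
        intro a b hab hbh heq
        have : ((b - a : ℕ)) • w = 0 := by
          have : ((b - a : ℕ) : ℤ) • w = 0 := by
            rw [show ((b - a : ℕ) : ℤ) = (b : ℤ) - (a : ℤ) by omega, sub_zsmul, ← heq]
            ring
          rwa [natCast_zsmul] at this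
        have hdvd : h ∣ b - a := by
          rw [← hh]; exact addOrderOf_dvd_of_nsmul_eq_zero this
        have h0 : b - a = 0 := Nat.eq_zero_of_dvd_of_lt hdvd (by omega)
        omega
      intro a b ha hb heq
      rcases le_total a b with hab | hab
      · exact key a b hab hb heq
      · exact (key b a hab ha heq.symm).symm
    refine ⟨F, fun k => ⟨hDF k, claim1 _ (hDF k)⟩, ?_, ?_, ?_, ?_⟩
    · -- no-disjointness
      intro k k' hkk'
      constructor
      · intro i j hwe
        obtain ⟨hte, hsw⟩ := window_eq_of (hDF k) (hDF k') hwe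
        obtain ⟨α, hα⟩ := Int.ModEq.dvd (hwinS i j hsw)
        have h2 : t₀ (i + α * m) = t₀ i + α • w := by
          rw [t_add_zsmul ht₀ hsper, ← hwdef]
        rw [show i + α * (m : ℤ) = j by linear_combination -hα] at h2
        have heq : (0 : ℤ) • w + rep k = α • w + rep k' := by
          have h3 : t₀ i + rep k = t₀ j + rep k' := hte
          rw [h2] at h3
          rw [zero_zsmul]
          linear_combination h3
        exact hkk' (hkey k k' 0 α heq).1
      · intro i j hcon
        exact hor i j (window_neg_of (hDF k) (hDF k') hcon)
    · -- translates
      intro k k'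
      exact ⟨rep k' - rep k, fun i => by show t₀ i + rep k' = (t₀ i + rep k) + (rep k' - rep k); ring⟩
    · -- characterization of D⁻¹(S)
      intro t
      constructor
      · intro ht
        set c : ZMod q := t 0 - t₀ 0 with hcdef
        have htc : ∀ i, t i = t₀ i + c := fun i => translate_of_D_eq ht₀ ht i
        refine ⟨e (QuotientAddGroup.mk c), ?_⟩
        set k := e (QuotientAddGroup.mk c) with hkdef
        have hmk : (QuotientAddGroup.mk (rep k) : ZMod q ⧸ H) = QuotientAddGroup.mk c := by
          rw [hrep, hkdef, Equiv.symm_apply_apply]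
        obtain ⟨β, hβ⟩ := QuotientAddGroup.eq.mp hmk
        have hβ' : c = rep k + β • w := by
          have : β • w = -rep k + c := hβ
          linear_combination -this
        have hα : ((β % (h : ℤ)).toNat : ℤ) = β % (h : ℤ) :=
          Int.toNat_of_nonneg (Int.emod_nonneg β (by exact_mod_cast hh0.ne'))
        have hαlt : (β % (h : ℤ)).toNat < h := by
          have := Int.emod_lt_of_pos β (show (0 : ℤ) < h by exact_mod_cast hh0)
          omega
        refine ⟨⟨(β % (h : ℤ)).toNat, hαlt⟩, ?_⟩
        funext i
        rw [htc i, hFshift k _ i]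
        have hsm : (((β % (h : ℤ)).toNat : ℕ) : ℤ) • w = β • w := by
          rw [hα]
          have hz : (β - β % (h : ℤ)) • w = 0 :=
            (hdvd_iff _).mpr (Int.dvd_self_sub_of_emod_eq rfl)
          rw [sub_zsmul] at hz
          linear_combination -hz
        rw [hsm, hβ']
        ring
      · rintro ⟨k, α, rfl⟩
        funext i
        show F k ((i + 1) + (α : ℕ) * (m : ℤ)) - F k (i + (α : ℕ) * (m : ℤ)) = s i
        rw [show (i + 1) + ((α : ℕ) : ℤ) * m = (i + ((α : ℕ) : ℤ) * m) + 1 by ring]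
        show (t₀ (i + ((α : ℕ) : ℤ) * m + 1) + rep k) - (t₀ (i + ((α : ℕ) : ℤ) * m) + rep k) = s i
        rw [D_step ht₀ (i + ((α : ℕ) : ℤ) * m)]
        rw [show i + ((α : ℕ) : ℤ) * m = i + (m : ℤ) * ((α : ℕ) : ℤ) by ring, s_period_mul hsper]
        ring
    · -- injectivity
      intro p p' hpe
      have h0 := congrFun hpe 0
      simp only at h0
      rw [hFshift p.1 ((p.2 : ℕ) : ℤ) 0, hFshift p'.1 ((p'.2 : ℕ) : ℤ) 0] at h0
      have heq : ((p.2 : ℕ) : ℤ) • w + rep p.1 = ((p'.2 : ℕ) : ℤ) • w + rep p'.1 := by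
        linear_combination h0
      obtain ⟨hk, hsw⟩ := hkey _ _ _ _ heq
      have hα : (p.2 : ℕ) = (p'.2 : ℕ) := hsmul_inj _ _ p.2.2 p'.2.2 hsw
      exact Prod.ext hk (Fin.ext hα)
end
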